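/- arXiv:1211.3230 — 4 statements merged into one kernel-verified Lean document; each statement's English description precedes it below -/
import Mathlib

section
/- Any upper-half-plane solution of the Marcenko–Pastur inverse equation at a real point is bounded: let H be a probability measure supported on (0,∞) with ∫ t^{-2} dH(t) < ∞, let c > 0 and x > 0, and suppose m ∈ ℂ with Im(m) > 0 satisfies x = −1/m + c ∫ t dH(t)/(1 + t m). Then |m|² ≤ (|c−1|/x)·|m| + (√c/x)·(∫ t^{-2} dH(t))^{1/2}, and consequently |m| ≤ |c−1|/x + ( (√c/x)·(∫ t^{-2} dH(t))^{1/2} )^{1/2}. In particular, if the density is defined by π f(x) = Im(m), then f(x) is bounded by a constant depending only on x (bounded below by a > 0), c, and ∫ t^{-2} dH(t). -/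
/-!
Multiplying the equation by `m` gives `x m = (c - 1) - c ∫ dH(t) / (1 + t m)`, and its imaginary
part gives `c |m|² ∫ |t / (1 + t m)|² dH(t) = 1`. Writing `|1 + t m|⁻¹ = |t / (1 + t m)| · t⁻¹`,
Cauchy–Schwarz bounds `∫ |1 + t m|⁻¹ dH` by `(√c |m|)⁻¹ (∫ t⁻² dH)^{1/2}`, so
`x |m|² ≤ |c - 1| |m| + √c (∫ t⁻² dH)^{1/2}`. This quadratic inequality bounds `|m|`,
and `Im m / π ≤ |m|`.
-/

open MeasureTheory Matrix Filter Finset Topology ProbabilityTheory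
open scoped ENNReal BigOperators

noncomputable section

/-- Empirical spectral distribution function of a Hermitian matrix:
`F^A(x) = p⁻¹ #{k : λ_k ≤ x}`. -/
def esd {m : ℕ} {A : Matrix (Fin m) (Fin m) ℝ} (hA : A.IsHermitian) (x : ℝ) : ℝ :=
  ((Finset.univ.filter fun k => hA.eigenvalues k ≤ x).card : ℝ) / m

/-- Empirical spectral measure of a Hermitian matrix. -/
def specMeasure {m : ℕ} {A : Matrix (Fin m) (Fin m) ℝ} (hA : A.IsHermitian) : Measure ℝ :=
  (m : ℝ≥0∞)⁻¹ • ∑ k : Fin m, Measure.dirac (hA.eigenvalues k)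

/-- The sample covariance matrix `A_n = n⁻¹ (R X) (R X)ᵀ` (with `R = T^{1/2}` this is
`n⁻¹ T^{1/2} X Xᵀ T^{1/2}`). -/
def covMat {pp nn : ℕ} (R : Matrix (Fin pp) (Fin pp) ℝ) (X : Matrix (Fin pp) (Fin nn) ℝ) :
    Matrix (Fin pp) (Fin pp) ℝ := ((nn : ℝ)⁻¹) • ((R * X) * (R * X)ᴴ)

theorem covMat_isHermitian {pp nn : ℕ} (R : Matrix (Fin pp) (Fin pp) ℝ)
    (X : Matrix (Fin pp) (Fin nn) ℝ) : (covMat R X).IsHermitian := by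
  have h1 : ((R * X) * (R * X)ᴴ).IsHermitian := Matrix.isHermitian_mul_conjTranspose_self _
  show _ = _
  rw [covMat, Matrix.conjTranspose_smul, h1.eq]
  norm_num

/-- The sample covariance matrix `S_n = n⁻¹ X Xᵀ`. -/
def sampleCov {pp nn : ℕ} (X : Matrix (Fin pp) (Fin nn) ℝ) : Matrix (Fin pp) (Fin pp) ℝ :=
  ((nn : ℝ)⁻¹) • (X * Xᴴ)

theorem sampleCov_isHermitian {pp nn : ℕ} (X : Matrix (Fin pp) (Fin nn) ℝ) :
    (sampleCov X).IsHermitian := by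
  have h1 : (X * Xᴴ).IsHermitian := Matrix.isHermitian_mul_conjTranspose_self _
  show _ = _
  rw [sampleCov, Matrix.conjTranspose_smul, h1.eq]
  norm_num

/-- Kernel density estimator built from the eigenvalues of a Hermitian matrix:
`f_n(x) = (p h)⁻¹ ∑_i K((x - μ_i)/h)`. -/
def kde {m : ℕ} {A : Matrix (Fin m) (Fin m) ℝ} (hA : A.IsHermitian)
    (K : ℝ → ℝ) (h x : ℝ) : ℝ :=
  (∑ i, K ((x - hA.eigenvalues i) / h)) / (m * h)

/-- The companion distribution `F̲ = (1-c)·1_{[0,∞)} + c·F` as a measure. -/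
def companion (c : ℝ) (ν : Measure ℝ) : Measure ℝ :=
  ENNReal.ofReal (1 - c) • Measure.dirac 0 + ENNReal.ofReal c • ν

/-- Stieltjes transform of a measure on ℝ. -/
def stieltjesT (ν : Measure ℝ) (z : ℂ) : ℂ := ∫ x, ((x : ℂ) - z)⁻¹ ∂ν

/-- The Marcenko–Pastur fixed point map `w ↦ -(z - c ∫ t dH(t)/(1 + t w))⁻¹`. -/
def mpMap (c : ℝ) (H : Measure ℝ) (z w : ℂ) : ℂ :=
  -(z - (c : ℂ) * ∫ t, (t : ℂ) / (1 + (t : ℂ) * w) ∂H)⁻¹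

/-- Complexification of a real matrix. -/
def mc {m k : ℕ} (A : Matrix (Fin m) (Fin k) ℝ) : Matrix (Fin m) (Fin k) ℂ :=
  A.map fun x => (x : ℂ)

/-- Resolvent `(A - z I)⁻¹`. -/
def resolv {m : ℕ} (A : Matrix (Fin m) (Fin m) ℝ) (z : ℂ) : Matrix (Fin m) (Fin m) ℂ :=
  (mc A - z • 1)⁻¹

/-- `A_1(z)⁻¹ = (A - s sᵀ - z I)⁻¹`. -/
def res1 {m : ℕ} (A : Matrix (Fin m) (Fin m) ℝ) (s : Fin m → ℝ) (z : ℂ) :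
    Matrix (Fin m) (Fin m) ℂ := (mc A - mc (Matrix.vecMulVec s s) - z • 1)⁻¹

/-- `s_1 = T^{1/2} x_1` where `x_1` is the first column of `X`. -/
def s1 {pp nn : ℕ} (R : Matrix (Fin pp) (Fin pp) ℝ) (X : Matrix (Fin pp) (Fin nn) ℝ)
    (hn : 0 < nn) : Fin pp → ℝ := R.mulVec fun i => X i ⟨0, hn⟩

/-- Quadratic form `sᵀ M s` of a real vector with a complex matrix. -/
def quadForm {m : ℕ} (M : Matrix (Fin m) (Fin m) ℂ) (s : Fin m → ℝ) : ℂ :=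
  dotProduct (fun i => (s i : ℂ)) (M.mulVec fun i => (s i : ℂ))

/-- `b_1 = (1 + n⁻¹ E tr(T A_1(z)⁻¹))⁻¹`. -/
def b1 {Ω : Type*} [MeasurableSpace Ω] (P : Measure Ω) {pp nn : ℕ}
    (T R : Matrix (Fin pp) (Fin pp) ℝ) (X : Ω → Matrix (Fin pp) (Fin nn) ℝ)
    (hn : 0 < nn) (z : ℂ) : ℂ :=
  (1 + (nn : ℂ)⁻¹ *
      ∫ ω, Matrix.trace (mc T * res1 (covMat R (X ω)) (s1 R (X ω) hn) z) ∂P)⁻¹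

/-- `β_1 = (1 + s_1ᵀ A_1(z)⁻¹ s_1)⁻¹`. -/
def beta1 {Ω : Type*} {pp nn : ℕ}
    (R : Matrix (Fin pp) (Fin pp) ℝ) (X : Ω → Matrix (Fin pp) (Fin nn) ℝ)
    (hn : 0 < nn) (z : ℂ) (ω : Ω) : ℂ :=
  (1 + quadForm (res1 (covMat R (X ω)) (s1 R (X ω) hn) z) (s1 R (X ω) hn))⁻¹

/-- `ξ_1 = s_1ᵀ A_1(z)⁻¹ s_1 - n⁻¹ E tr(A_1(z)⁻¹ T)`. -/
def xi1 {Ω : Type*} [MeasurableSpace Ω] (P : Measure Ω) {pp nn : ℕ}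
    (T R : Matrix (Fin pp) (Fin pp) ℝ) (X : Ω → Matrix (Fin pp) (Fin nn) ℝ)
    (hn : 0 < nn) (z : ℂ) (ω : Ω) : ℂ :=
  quadForm (res1 (covMat R (X ω)) (s1 R (X ω) hn) z) (s1 R (X ω) hn)
    - (nn : ℂ)⁻¹ *
      ∫ ω', Matrix.trace (res1 (covMat R (X ω')) (s1 R (X ω') hn) z * mc T) ∂P

/-- `ρ_n = b_1 E(β_1 ξ_1)`. -/
def rhoN {Ω : Type*} [MeasurableSpace Ω] (P : Measure Ω) {pp nn : ℕ}
    (T R : Matrix (Fin pp) (Fin pp) ℝ) (X : Ω → Matrix (Fin pp) (Fin nn) ℝ)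
    (hn : 0 < nn) (z : ℂ) : ℂ :=
  b1 P T R X hn z * ∫ ω, beta1 R X hn z ω * xi1 P T R X hn z ω ∂P

/-- `m_n(z) = p⁻¹ tr((A_n - zI)⁻¹)`, the Stieltjes transform of the ESD of `A_n`. -/
def mnz {pp nn : ℕ} (R : Matrix (Fin pp) (Fin pp) ℝ) (Xm : Matrix (Fin pp) (Fin nn) ℝ)
    (z : ℂ) : ℂ := (pp : ℂ)⁻¹ * Matrix.trace (resolv (covMat R Xm) z)

/-- `m̲_n(z) = -(1 - c_n)/z + c_n m_n(z)` with `c_n = p/n`. -/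
def mUnder {pp nn : ℕ} (R : Matrix (Fin pp) (Fin pp) ℝ) (Xm : Matrix (Fin pp) (Fin nn) ℝ)
    (z : ℂ) : ℂ :=
  -(1 - (pp : ℂ) / (nn : ℂ)) / z + ((pp : ℂ) / (nn : ℂ)) * mnz R Xm z

/-- The Marcenko–Pastur density with ratio parameter `c`. -/
def mpDensity (c x : ℝ) : ℝ :=
  if (1 - Real.sqrt c) ^ 2 ≤ x ∧ x ≤ (1 + Real.sqrt c) ^ 2 then
    Real.sqrt (((1 + Real.sqrt c) ^ 2 - x) * (x - (1 - Real.sqrt c) ^ 2))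
      / (2 * Real.pi * c * x)
  else 0

theorem integral_norm_mul_norm_le_sqrt_mul_sqrt {α E F : Type*} [MeasurableSpace α]
    {μ : Measure α} [NormedAddCommGroup E] [NormedAddCommGroup F] {f : α → E} {g : α → F}
    (hf : MemLp f 2 μ) (hg : MemLp g 2 μ) :
    ∫ a, ‖f a‖ * ‖g a‖ ∂μ ≤ √(∫ a, ‖f a‖ ^ 2 ∂μ) * √(∫ a, ‖g a‖ ^ 2 ∂μ) := by
  have key := integral_mul_norm_le_Lp_mul_Lq Real.HolderConjugate.two_two
    (by simpa using hf.norm) (by simpa using hg.norm)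
  simpa only [norm_norm, Real.rpow_two, Real.sqrt_eq_rpow] using key

theorem le_add_sqrt_of_sq_le_mul_add {r a b : ℝ} (ha : 0 ≤ a) (h : r ^ 2 ≤ a * r + b) :
    r ≤ a + √b := by
  by_contra! hlt
  have hr : √b < r := by linarith
  have hb : b ≤ √b * r := by
    rcases le_or_gt 0 b with hb | hb
    · nlinarith [Real.mul_self_sqrt hb, Real.sqrt_nonneg b]
    · nlinarith [Real.sqrt_nonneg b]
  have hr0 : 0 < r := (Real.sqrt_nonneg b).trans_lt hr
  nlinarith [mul_lt_mul_of_pos_left hlt hr0]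

namespace Complex

open ComplexConjugate

variable {m : ℂ}

theorem abs_mul_im_le_norm_one_add_mul (t : ℝ) (m : ℂ) : |t| * m.im ≤ ‖1 + t * m‖ := by
  have h := abs_im_le_norm (1 + t * m)
  rw [add_im, one_im, zero_add, im_ofReal_mul, abs_mul] at h
  exact (mul_le_mul_of_nonneg_left (le_abs_self _) (abs_nonneg t)).trans h

theorem im_le_norm_mul_norm_one_add_mul (t : ℝ) (m : ℂ) : m.im ≤ ‖m‖ * ‖1 + t * m‖ := by
  have hconj : (conj m * (1 + t * m)).im = -m.im := by
    simp only [mul_im, conj_re, conj_im, add_re, add_im, one_re, one_im, re_ofReal_mul,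
      ofReal_re, ofReal_im]
    ring
  calc m.im ≤ |(conj m * (1 + t * m)).im| := by rw [hconj, abs_neg]; exact le_abs_self _
    _ ≤ ‖conj m * (1 + t * m)‖ := abs_im_le_norm _
    _ = ‖m‖ * ‖1 + t * m‖ := by rw [norm_mul, norm_conj]

theorem one_add_mul_ne_zero (hm : 0 < m.im) (t : ℝ) : 1 + t * m ≠ 0 := by
  intro h
  have := im_le_norm_mul_norm_one_add_mul t m
  rw [h, norm_zero, mul_zero] at this
  linarith

theorem norm_div_one_add_mul_le (hm : 0 < m.im) (t : ℝ) : ‖(t : ℂ) / (1 + t * m)‖ ≤ m.im⁻¹ := by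
  rw [norm_div, norm_real, Real.norm_eq_abs,
    div_le_iff₀ (norm_pos_iff.2 (one_add_mul_ne_zero hm t)), inv_mul_eq_div, le_div_iff₀ hm]
  exact abs_mul_im_le_norm_one_add_mul t m

theorem norm_inv_one_add_mul_le (hm : 0 < m.im) (t : ℝ) : ‖(1 + t * m)⁻¹‖ ≤ ‖m‖ / m.im := by
  have hm0 : 0 < ‖m‖ := norm_pos_iff.2 fun h ↦ by simp [h] at hm
  rw [norm_inv, inv_le_comm₀ (norm_pos_iff.2 (one_add_mul_ne_zero hm t)) (by positivity), inv_div,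
    div_le_iff₀ hm0, mul_comm]
  exact im_le_norm_mul_norm_one_add_mul t m

theorem im_div_one_add_mul (t : ℝ) (m : ℂ) :
    ((t : ℂ) / (1 + t * m)).im = -(m.im * ‖(t : ℂ) / (1 + t * m)‖ ^ 2) := by
  rw [Complex.sq_norm, normSq_div, normSq_ofReal, div_eq_mul_inv, im_ofReal_mul, inv_im]
  simp only [add_im, one_im, im_ofReal_mul, zero_add]
  ring

theorem mul_div_one_add_mul (hm : 0 < m.im) (t : ℝ) :
    m * ((t : ℂ) / (1 + t * m)) = 1 - (1 + t * m)⁻¹ := by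
  rw [← mul_div_assoc, show m * t = 1 + t * m - 1 by ring, sub_div,
    div_self (one_add_mul_ne_zero hm t), one_div]

end Complex

namespace MarcenkoPastur

open Complex

variable {μ : Measure ℝ} {c x : ℝ} {m : ℂ}

theorem memLp_div_one_add_mul [IsFiniteMeasure μ] (hm : 0 < m.im) (p : ℝ≥0∞) :
    MemLp (fun t : ℝ ↦ (t : ℂ) / (1 + t * m)) p μ :=
  .of_bound (by fun_prop : Measurable _).aestronglyMeasurable _
    (.of_forall (norm_div_one_add_mul_le hm))

theorem integrable_inv_one_add_mul [IsFiniteMeasure μ] (hm : 0 < m.im) :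
    Integrable (fun t : ℝ ↦ (1 + t * m)⁻¹) μ :=
  .of_bound (by fun_prop) _ (.of_forall (norm_inv_one_add_mul_le hm))

theorem integral_norm_inv_one_add_mul_le [IsFiniteMeasure μ] (hm : 0 < m.im)
    (h0 : ∀ᵐ t ∂μ, t ≠ 0) (hint : Integrable (fun t : ℝ ↦ t⁻¹ ^ 2) μ) :
    ∫ t, ‖(1 + t * m)⁻¹‖ ∂μ ≤
      √(∫ t, ‖(t : ℂ) / (1 + t * m)‖ ^ 2 ∂μ) * √(∫ t, t⁻¹ ^ 2 ∂μ) := by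
  have hinv : MemLp (fun t : ℝ ↦ t⁻¹) 2 μ :=
    (memLp_two_iff_integrable_sq (by fun_prop)).2 hint
  calc ∫ t, ‖(1 + t * m)⁻¹‖ ∂μ = ∫ t, ‖(t : ℂ) / (1 + t * m)‖ * ‖t⁻¹‖ ∂μ := by
        refine integral_congr_ae (h0.mono fun t ht ↦ ?_)
        dsimp only
        rw [norm_div, norm_inv, norm_real, div_mul_eq_mul_div, ← norm_mul, mul_inv_cancel₀ ht,
          norm_one, one_div]
    _ ≤ √(∫ t, ‖(t : ℂ) / (1 + t * m)‖ ^ 2 ∂μ) * √(∫ t, ‖t⁻¹‖ ^ 2 ∂μ) :=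
        integral_norm_mul_norm_le_sqrt_mul_sqrt (memLp_div_one_add_mul hm 2) hinv
    _ = √(∫ t, ‖(t : ℂ) / (1 + t * m)‖ ^ 2 ∂μ) * √(∫ t, t⁻¹ ^ 2 ∂μ) := by
        simp only [Real.norm_eq_abs, sq_abs]

theorem mul_sq_norm_mul_integral_eq_one [IsFiniteMeasure μ] (hm : 0 < m.im)
    (heq : (x : ℂ) = -m⁻¹ + (c : ℂ) * ∫ t, (t : ℂ) / (1 + (t : ℂ) * m) ∂μ) :
    c * ‖m‖ ^ 2 * ∫ t, ‖(t : ℂ) / (1 + t * m)‖ ^ 2 ∂μ = 1 := by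
  have hI : (∫ t, (t : ℂ) / (1 + t * m) ∂μ).im =
      -(m.im * ∫ t, ‖(t : ℂ) / (1 + t * m)‖ ^ 2 ∂μ) := by
    rw [← RCLike.im_to_complex,
      ← integral_im (memLp_one_iff_integrable.1 (memLp_div_one_add_mul hm 1))]
    simp only [RCLike.im_to_complex, im_div_one_add_mul, integral_neg, integral_const_mul]
  have him := congrArg im heq
  simp only [ofReal_im, add_im, neg_im, inv_im, im_ofReal_mul, hI, ← Complex.sq_norm] at him
  have hm0 : ‖m‖ ≠ 0 := norm_ne_zero_iff.2 fun h ↦ by simp [h] at hm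
  have hfactor : m.im * (1 - c * ‖m‖ ^ 2 * ∫ t, ‖(t : ℂ) / (1 + t * m)‖ ^ 2 ∂μ) = 0 := by
    field_simp at him
    linear_combination -him
  exact (sub_eq_zero.1 ((mul_eq_zero.1 hfactor).resolve_left hm.ne')).symm

theorem ofReal_mul_eq_sub_mul_integral_inv [IsProbabilityMeasure μ] (hm : 0 < m.im)
    (heq : (x : ℂ) = -m⁻¹ + (c : ℂ) * ∫ t, (t : ℂ) / (1 + (t : ℂ) * m) ∂μ) :
    (x : ℂ) * m = (c - 1) - c * ∫ t, (1 + t * m)⁻¹ ∂μ := by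
  have hm0 : m ≠ 0 := fun h ↦ by simp [h] at hm
  have hJ : m * ∫ t, (t : ℂ) / (1 + t * m) ∂μ = 1 - ∫ t, (1 + t * m)⁻¹ ∂μ := by
    simp_rw [← integral_const_mul, mul_div_one_add_mul hm]
    rw [integral_sub (integrable_const 1) (integrable_inv_one_add_mul hm), integral_const,
      probReal_univ, one_smul]
  calc (x : ℂ) * m = -(m⁻¹ * m) + c * (m * ∫ t, (t : ℂ) / (1 + t * m) ∂μ) := by rw [heq]; ring
    _ = (c - 1) - c * ∫ t, (1 + t * m)⁻¹ ∂μ := by rw [inv_mul_cancel₀ hm0, hJ]; ring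

theorem mul_sq_norm_le [IsProbabilityMeasure μ] (hc : 0 < c) (hx : 0 < x) (hm : 0 < m.im)
    (h0 : ∀ᵐ t ∂μ, t ≠ 0) (hint : Integrable (fun t : ℝ ↦ t⁻¹ ^ 2) μ)
    (heq : (x : ℂ) = -m⁻¹ + (c : ℂ) * ∫ t, (t : ℂ) / (1 + (t : ℂ) * m) ∂μ) :
    x * ‖m‖ ^ 2 ≤ |c - 1| * ‖m‖ + √c * √(∫ t, t⁻¹ ^ 2 ∂μ) := by
  have hr : 0 < ‖m‖ := norm_pos_iff.2 fun h ↦ by simp [h] at hm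
  have hid := mul_sq_norm_mul_integral_eq_one hm heq
  set A := ∫ t, ‖(t : ℂ) / (1 + t * m)‖ ^ 2 ∂μ
  have hA : c * √A * ‖m‖ = √c := by
    rw [eq_inv_of_mul_eq_one_right hid, Real.sqrt_inv, Real.sqrt_mul hc.le, Real.sqrt_sq hr.le]
    field_simp
    exact (Real.sq_sqrt hc.le).symm
  have hnorm : ‖(x : ℂ) * m‖ ≤ |c - 1| + c * (√A * √(∫ t, t⁻¹ ^ 2 ∂μ)) := by
    rw [ofReal_mul_eq_sub_mul_integral_inv hm heq]
    refine (norm_sub_le _ _).trans (add_le_add ?_ ?_)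
    · rw [← ofReal_one, ← ofReal_sub, norm_real, Real.norm_eq_abs]
    · rw [norm_mul, norm_real, Real.norm_of_nonneg hc.le]
      gcongr
      exact (norm_integral_le_integral_norm _).trans (integral_norm_inv_one_add_mul_le hm h0 hint)
  calc x * ‖m‖ ^ 2 = ‖(x : ℂ) * m‖ * ‖m‖ := by
        rw [norm_mul, norm_real, Real.norm_of_nonneg hx.le]; ring
    _ ≤ (|c - 1| + c * (√A * √(∫ t, t⁻¹ ^ 2 ∂μ))) * ‖m‖ := by gcongr
    _ = |c - 1| * ‖m‖ + √c * √(∫ t, t⁻¹ ^ 2 ∂μ) := by rw [← hA]; ring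

end MarcenkoPastur

/-- Lemma 1 (core bound): any upper half-plane solution of the Marcenko–Pastur inverse
equation at a real point `x > 0` is bounded, and hence so is the density `π⁻¹ Im m`. -/
theorem mp_inverse_equation_solution_bounded
    (H : Measure ℝ) [IsProbabilityMeasure H]
    (hsupp : H (Set.Iic (0 : ℝ)) = 0)
    (hint : Integrable (fun t : ℝ => t⁻¹ ^ 2) H)
    (c x : ℝ) (hc : 0 < c) (hx : 0 < x)
    (m : ℂ) (hm : 0 < m.im)
    (heq : (x : ℂ) = -m⁻¹ + (c : ℂ) * ∫ t, (t : ℂ) / (1 + (t : ℂ) * m) ∂H) :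
    ‖m‖ ^ 2 ≤ |c - 1| / x * ‖m‖ + Real.sqrt c / x * Real.sqrt (∫ t, t⁻¹ ^ 2 ∂H) ∧
    ‖m‖ ≤ |c - 1| / x + Real.sqrt (Real.sqrt c / x * Real.sqrt (∫ t, t⁻¹ ^ 2 ∂H)) ∧
    m.im / Real.pi ≤ |c - 1| / x
        + Real.sqrt (Real.sqrt c / x * Real.sqrt (∫ t, t⁻¹ ^ 2 ∂H)) := by
  have h0 : ∀ᵐ t ∂H, t ≠ 0 :=
    ae_iff.2 (measure_mono_null (fun t ht ↦ (not_ne_iff.1 ht).le) hsupp)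
  have hquad : ‖m‖ ^ 2 ≤ |c - 1| / x * ‖m‖ + √c / x * √(∫ t, t⁻¹ ^ 2 ∂H) := by
    rw [div_mul_eq_mul_div, div_mul_eq_mul_div, ← add_div, le_div_iff₀ hx, mul_comm]
    exact MarcenkoPastur.mul_sq_norm_le hc hx hm h0 hint heq
  have hnorm := le_add_sqrt_of_sq_le_mul_add (by positivity) hquad
  have him : m.im / Real.pi ≤ m.im :=
    div_le_self hm.le (Real.one_le_pi_div_two.trans (half_le_self Real.pi_pos.le))
  exact ⟨hquad, hnorm, him.trans ((Complex.im_le_norm m).trans hnorm)⟩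
end
end

section
/- Under the assumptions of Theorem 1, the densities f_{c_n,H_n} approximate f_{c,H} along converging sequences: if x_n → x with x_n, x in the support [a,b] (a > 0) of F_{c,H}, then f_{c_n,H_n}(x_n) − f_{c,H}(x_n) → 0 as n → ∞. -/
open MeasureTheory Matrix Filter Finset Topology ProbabilityTheory
open scoped ENNReal BigOperators

noncomputable section

/-!
Write `g_{c,μ}(m) = -1/m + c ∫ t dμ(t)/(1 + t m)`, a holomorphic function on the upper
half-plane, so that `m_n(x_n)` and `m(x)` are the unique solutions there of `g_{c_n,H_n} = x_n`
and `g_{c,H} = x`. The integrands are bounded and uniformly Lipschitz on `{Im w ≥ κ}`, so weak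
convergence `H_n → H` upgrades to locally uniform convergence `g_{c_n,H_n} → g_{c,H}`.

If `Im m(x) > 0`, then `m(x)` is an isolated zero of `g_{c,H} - x` (as `g_{c,H} → 0` when
`Im w → ∞`, it is not constant), and a minimum-modulus (Hurwitz) argument produces a zero of
`g_{c_n,H_n} - x_n` near `m(x)`, which by uniqueness is `m_n(x_n)`. If `Im m(x) = 0`, there is no
solution at `x` in the open half-plane, while solutions with `Im m ≥ ε` obey the a priori bound
`|m| ≤ (1 + √c)/x`; a convergent subsequence would produce such a solution in the limit, so
`Im m_n(x_n) → 0`. Both cases give `Im m_n(x_n) → Im m(x)`, and the same holds for `m(x_n)`.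
-/

open Metric UpperHalfPlane
open scoped NNReal BoundedContinuousFunction

local notation "ℍₒ" => upperHalfPlaneSet

lemma norm_integral_le_of_forall_norm_le {α E : Type*} [MeasurableSpace α]
    [NormedAddCommGroup E] [NormedSpace ℝ E] {μ : Measure α} [IsZeroOrProbabilityMeasure μ]
    {f : α → E} {C : ℝ} (hC : 0 ≤ C) (h : ∀ a, ‖f a‖ ≤ C) : ‖∫ a, f a ∂μ‖ ≤ C :=
  (norm_integral_le_of_norm_le_const (ae_of_all _ h)).trans
    (mul_le_of_le_one_right hC measureReal_le_one)

lemma integral_le_of_integral_sq_le {α : Type*} [MeasurableSpace α] {μ : Measure α}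
    [IsZeroOrProbabilityMeasure μ] {f : α → ℝ} (hf : Integrable f μ)
    (hf2 : Integrable (fun a => f a ^ 2) μ) {A : ℝ} (hA : 0 < A)
    (h : ∫ a, f a ^ 2 ∂μ ≤ A ^ 2) : ∫ a, f a ∂μ ≤ A := by
  have hpt : ∀ a, f a ≤ (A + f a ^ 2 / A) / 2 := fun a => by
    have := sq_nonneg (f a - A)
    field_simp
    nlinarith
  calc ∫ a, f a ∂μ ≤ ∫ a, (A + f a ^ 2 / A) / 2 ∂μ :=
        integral_mono hf (((integrable_const A).add (hf2.div_const A)).div_const 2) hpt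
    _ = (A * μ.real Set.univ + (∫ a, f a ^ 2 ∂μ) / A) / 2 := by
        rw [integral_div, integral_add (integrable_const A) (hf2.div_const A), integral_const,
          integral_div, smul_eq_mul, mul_comm]
    _ ≤ (A * 1 + A ^ 2 / A) / 2 := by gcongr; exact measureReal_le_one
    _ = A := by field_simp; ring

lemma tendsto_integral_complex_of_forall_real {ι Ω : Type*} [TopologicalSpace Ω] [MeasurableSpace Ω]
    [OpensMeasurableSpace Ω] {l : Filter ι} {μs : ι → Measure Ω} [∀ i, IsFiniteMeasure (μs i)]
    {μ : Measure Ω} [IsFiniteMeasure μ]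
    (h : ∀ g : Ω →ᵇ ℝ, Tendsto (fun i => ∫ x, g x ∂μs i) l (𝓝 (∫ x, g x ∂μ))) (f : Ω →ᵇ ℂ) :
    Tendsto (fun i => ∫ x, f x ∂μs i) l (𝓝 (∫ x, f x ∂μ)) := by
  rw [← integral_re_add_im (f.integrable μ)]
  simp_rw [← integral_re_add_im (f.integrable (μs _))]
  refine Tendsto.add ?_ ?_
  · exact (RCLike.continuous_ofReal.tendsto _).comp (h (f.comp RCLike.re RCLike.lipschitzWith_re))
  · exact ((RCLike.continuous_ofReal.tendsto _).comp
      (h (f.comp RCLike.im RCLike.lipschitzWith_im))).mul_const _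

lemma tendstoUniformlyOn_of_lipschitzOnWith {ι X α : Type*} [PseudoMetricSpace X]
    [PseudoMetricSpace α] {l : Filter ι} {F : ι → X → α} {f : X → α} {K : Set X}
    (hK : IsCompact K) {L : ℝ≥0} (hF : ∀ i, LipschitzOnWith L (F i) K)
    (h : ∀ x ∈ K, Tendsto (fun i => F i x) l (𝓝 (f x))) : TendstoUniformlyOn F f l K := by
  have hF' : EquicontinuousOn F K :=
    (LipschitzOnWith.uniformEquicontinuousOn F L hF).equicontinuousOn
  have := (EquicontinuousOn.tendsto_uniformOnFun_iff_pi' (𝔖 := {K}) (by simpa using hK)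
    (by simpa using hF') l f).2 (tendsto_pi_nhds.2 fun x => h x (by simpa using x.2))
  exact (UniformOnFun.tendsto_iff_tendstoUniformlyOn.1 this) K rfl

lemma im_sub_le_im_of_mem_closedBall {w₀ w : ℂ} {r : ℝ} (h : w ∈ closedBall w₀ r) :
    w₀.im - r ≤ w.im := by
  have := (Complex.abs_im_le_norm (w - w₀)).trans (mem_closedBall_iff_norm.mp h)
  rw [Complex.sub_im] at this
  linarith [neg_abs_le (w.im - w₀.im)]

lemma exists_mem_closedBall_eq_zero_of_norm_lt {h : ℂ → ℂ} {z₀ : ℂ} {r δ : ℝ} (hr : 0 < r)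
    (hd : DifferentiableOn ℂ h (closedBall z₀ r)) (hz₀ : ‖h z₀‖ < δ)
    (hsphere : ∀ w ∈ sphere z₀ r, δ ≤ ‖h w‖) : ∃ z ∈ closedBall z₀ r, h z = 0 := by
  by_contra! hne
  have hδ : 0 < δ := (norm_nonneg _).trans_lt hz₀
  have hinv : DiffContOnCl ℂ (fun w => (h w)⁻¹) (ball z₀ r) := by
    have := hd.inv hne
    exact ⟨this.mono ball_subset_closedBall, closure_ball z₀ hr.ne' ▸ this.continuousOn⟩
  have hmax := Complex.norm_le_of_forall_mem_frontier_norm_le isBounded_ball hinv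
    (C := δ⁻¹) (fun w hw => by
      rw [frontier_ball z₀ hr.ne'] at hw
      rw [norm_inv]
      exact inv_anti₀ hδ (hsphere w hw))
    (subset_closure (mem_ball_self hr))
  rw [norm_inv, inv_le_inv₀ (norm_pos_iff.mpr (hne z₀ (mem_closedBall_self hr.le))) hδ] at hmax
  linarith

theorem tendsto_of_tendstoLocallyUniformlyOn_of_unique_zero {ι : Type*} {l : Filter ι}
    {U : Set ℂ} (hU : IsOpen U) {F : ι → ℂ → ℂ} {f : ℂ → ℂ}
    (hF : ∀ i, DifferentiableOn ℂ (F i) U) (hFf : TendstoLocallyUniformlyOn F f l U)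
    {z₀ : ℂ} (hz₀ : z₀ ∈ U) (hf₀ : f z₀ = 0) (hf_ne : ∀ᶠ z in 𝓝[≠] z₀, f z ≠ 0)
    {z : ι → ℂ} (hz : ∀ i, ∀ w ∈ U, F i w = 0 → w = z i) : Tendsto z l (𝓝 z₀) := by
  rcases l.eq_or_neBot with rfl | hl
  · exact tendsto_bot
  have hfc : ContinuousOn f U := hFf.continuousOn (.of_forall fun i => (hF i).continuousOn)
  rw [Metric.tendsto_nhds]
  intro ε hε
  obtain ⟨r₀, hr₀, hr₀U⟩ := Metric.eventually_nhds_iff.mp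
    ((eventually_nhdsWithin_iff.mp hf_ne).and (hU.mem_nhds hz₀))
  obtain ⟨r, hr, hrε, hrr₀⟩ : ∃ r, 0 < r ∧ r < ε ∧ r < r₀ :=
    ⟨min ε r₀ / 2, by positivity, by linarith [min_le_left ε r₀, lt_min hε hr₀],
      by linarith [min_le_right ε r₀, lt_min hε hr₀]⟩
  have hball : closedBall z₀ r ⊆ U := fun w hw => (hr₀U (hw.trans_lt hrr₀)).2
  obtain ⟨w₁, hw₁, hmin⟩ := (isCompact_sphere z₀ r).exists_isMinOn
    (NormedSpace.sphere_nonempty.mpr hr.le)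
    ((hfc.mono (sphere_subset_closedBall.trans hball)).norm)
  have hδ : 0 < ‖f w₁‖ := by
    rw [mem_sphere] at hw₁
    refine norm_pos_iff.mpr ((hr₀U (hw₁.trans_lt hrr₀)).1 fun h => ?_)
    rw [Set.mem_singleton_iff.mp h, dist_self] at hw₁
    exact hr.ne hw₁
  have hunif := (tendstoLocallyUniformlyOn_iff_tendstoUniformlyOn_of_compact
    (isCompact_closedBall z₀ r)).mp (hFf.mono hball)
  filter_upwards [Metric.tendstoUniformlyOn_iff.mp hunif _ (half_pos hδ)] with i hi
  obtain ⟨w, hw, hFw⟩ := exists_mem_closedBall_eq_zero_of_norm_lt hr ((hF i).mono hball)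
    (δ := ‖f w₁‖ / 2) (by
      have := hi z₀ (mem_closedBall_self hr.le)
      rwa [hf₀, dist_zero_left] at this)
    (fun w hw => by
      have h1 := hi w (sphere_subset_closedBall hw)
      have h2 : ‖f w₁‖ ≤ ‖f w‖ := hmin hw
      rw [dist_eq_norm] at h1
      linarith [norm_sub_norm_le (f w) (F i w)])
  rw [← hz i w (hball hw) hFw]
  exact (mem_closedBall.mp hw).trans_lt hrε

def mpKernel (w : ℂ) (t : ℝ) : ℂ := t / (1 + t * w)

def mpIntegral (μ : Measure ℝ) (w : ℂ) : ℂ := ∫ t, mpKernel w t ∂μ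

def mpInverse (c : ℝ) (μ : Measure ℝ) (w : ℂ) : ℂ := -w⁻¹ + c * mpIntegral μ w

lemma abs_mul_im_le_norm_one_add_mul (t : ℝ) (w : ℂ) : |t| * w.im ≤ ‖1 + t * w‖ := by
  have : ((1 : ℂ) + t * w).im = t * w.im := by simp
  calc |t| * w.im ≤ |t * w.im| := by rw [abs_mul]; gcongr; exact le_abs_self _
    _ ≤ ‖1 + t * w‖ := this ▸ Complex.abs_im_le_norm _

lemma one_add_mul_ne_zero (t : ℝ) {w : ℂ} (hw : 0 < w.im) : (1 : ℂ) + t * w ≠ 0 := by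
  intro h
  have him : ((1 : ℂ) + t * w).im = t * w.im := by simp
  have hre : ((1 : ℂ) + t * w).re = 1 + t * w.re := by simp
  rw [h] at him hre
  rcases mul_eq_zero.mp him.symm with rfl | h0
  · simp at hre
  · exact hw.ne' h0

lemma norm_mpKernel_le {w : ℂ} (hw : 0 < w.im) (t : ℝ) : ‖mpKernel w t‖ ≤ 1 / w.im := by
  rcases eq_or_ne t 0 with rfl | ht
  · simp [mpKernel]; positivity
  have hpos : 0 < |t| * w.im := by positivity
  rw [mpKernel, norm_div, Complex.norm_real, Real.norm_eq_abs,
    div_le_div_iff₀ (hpos.trans_le (abs_mul_im_le_norm_one_add_mul t w)) hw, one_mul]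
  exact abs_mul_im_le_norm_one_add_mul t w

lemma continuous_mpKernel {w : ℂ} (hw : 0 < w.im) : Continuous (mpKernel w) := by
  unfold mpKernel
  exact Complex.continuous_ofReal.div (by fun_prop) (one_add_mul_ne_zero · hw)

lemma im_mpKernel (w : ℂ) (t : ℝ) : (mpKernel w t).im = -w.im * ‖mpKernel w t‖ ^ 2 := by
  rw [Complex.sq_norm, mpKernel, Complex.div_im, Complex.normSq_div]
  simp only [Complex.ofReal_im, Complex.ofReal_re, Complex.add_im, Complex.add_re, Complex.mul_im,
    Complex.mul_re, Complex.one_im, Complex.one_re, Complex.normSq_ofReal]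
  ring

lemma mpKernel_sub_mpKernel {w w' : ℂ} (hw : 0 < w.im) (hw' : 0 < w'.im) (t : ℝ) :
    mpKernel w t - mpKernel w' t = mpKernel w t * mpKernel w' t * (w' - w) := by
  have := one_add_mul_ne_zero t hw
  have := one_add_mul_ne_zero t hw'
  simp only [mpKernel]
  field_simp
  ring

lemma hasDerivAt_mpKernel {w : ℂ} (hw : 0 < w.im) (t : ℝ) :
    HasDerivAt (fun v => mpKernel v t) (-mpKernel w t ^ 2) w := by
  have hden : HasDerivAt (fun v : ℂ => 1 + t * v) t w := by
    simpa using ((hasDerivAt_id w).const_mul (t : ℂ)).const_add 1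
  refine ((hasDerivAt_const w (t : ℂ)).div hden (one_add_mul_ne_zero t hw)).congr_deriv ?_
  rw [mpKernel, div_pow]
  ring

section FiniteMeasure

variable {μ : Measure ℝ} [IsFiniteMeasure μ]

lemma integrable_mpKernel {w : ℂ} (hw : 0 < w.im) :
    Integrable (mpKernel w) μ :=
  .of_bound (continuous_mpKernel hw).aestronglyMeasurable _ (ae_of_all _ (norm_mpKernel_le hw))

lemma integrable_norm_mpKernel_sq {w : ℂ} (hw : 0 < w.im) :
    Integrable (fun t => ‖mpKernel w t‖ ^ 2) μ :=
  .of_bound ((continuous_mpKernel hw).norm.pow 2).aestronglyMeasurable ((1 / w.im) ^ 2)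
    (ae_of_all _ fun t => by
      rw [norm_pow, norm_norm]; gcongr; exact norm_mpKernel_le hw t)

lemma im_mpIntegral {w : ℂ} (hw : 0 < w.im) :
    (mpIntegral μ w).im = -w.im * ∫ t, ‖mpKernel w t‖ ^ 2 ∂μ := by
  rw [mpIntegral, ← integral_const_mul, ← RCLike.im_eq_complex_im,
    ← integral_im (integrable_mpKernel hw)]
  exact integral_congr_ae (ae_of_all _ fun t => im_mpKernel w t)

lemma differentiableAt_mpIntegral {w₀ : ℂ} (hw₀ : 0 < w₀.im) :
    DifferentiableAt ℂ (mpIntegral μ) w₀ := by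
  set s : Set ℂ := {w | w₀.im / 2 < w.im}
  have hs : s ∈ 𝓝 w₀ :=
    (isOpen_lt continuous_const Complex.continuous_im).mem_nhds (show w₀.im / 2 < w₀.im by linarith)
  have hs_pos : ∀ w ∈ s, 0 < w.im := fun w hw => (half_pos hw₀).trans hw
  have hbound : ∀ t, ∀ w ∈ s, ‖-mpKernel w t ^ 2‖ ≤ (2 / w₀.im) ^ 2 := fun t w hw => by
    rw [norm_neg, norm_pow]
    gcongr
    refine (norm_mpKernel_le (hs_pos w hw) t).trans ?_
    change w₀.im / 2 < w.im at hw
    rw [div_le_div_iff₀ (hs_pos w hw) hw₀]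
    linarith
  exact (hasDerivAt_integral_of_dominated_loc_of_deriv_le hs
    (eventually_of_mem hs fun w hw => (continuous_mpKernel (hs_pos w hw)).aestronglyMeasurable)
    (integrable_mpKernel hw₀) ((continuous_mpKernel hw₀).pow 2).neg.aestronglyMeasurable
    (ae_of_all _ hbound) (integrable_const _)
    (ae_of_all _ fun t w hw => hasDerivAt_mpKernel (hs_pos w hw) t)).2.differentiableAt

lemma differentiableOn_mpInverse (c : ℝ) : DifferentiableOn ℂ (mpInverse c μ) ℍₒ := fun w hw =>
  ((differentiableAt_inv (fun h => by simp [h] at hw)).neg.add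
    ((differentiableAt_mpIntegral hw).const_mul _)).differentiableWithinAt

end FiniteMeasure

section ZeroOrProbabilityMeasure

variable {μ : Measure ℝ} [IsZeroOrProbabilityMeasure μ]

lemma norm_mpIntegral_le {w : ℂ} (hw : 0 < w.im) : ‖mpIntegral μ w‖ ≤ 1 / w.im :=
  norm_integral_le_of_forall_norm_le (by positivity) (norm_mpKernel_le hw)

lemma lipschitzOnWith_mpIntegral {κ : ℝ≥0} (hκ : 0 < κ) :
    LipschitzOnWith (κ⁻¹ ^ 2) (mpIntegral μ) {w | κ ≤ w.im} := by
  refine LipschitzOnWith.of_dist_le_mul fun w hw w' hw' => ?_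
  have hw₀ : 0 < w.im := (NNReal.coe_pos.mpr hκ).trans_le hw
  have hw₀' : 0 < w'.im := (NNReal.coe_pos.mpr hκ).trans_le hw'
  have hpt : ∀ t, ‖mpKernel w t - mpKernel w' t‖ ≤ κ⁻¹ ^ 2 * dist w w' := fun t => by
    rw [mpKernel_sub_mpKernel hw₀ hw₀', norm_mul, norm_mul, ← dist_eq_norm', NNReal.coe_inv, sq]
    gcongr
    · exact (norm_mpKernel_le hw₀ t).trans (by rw [one_div]; gcongr; exact hw)
    · exact (norm_mpKernel_le hw₀' t).trans (by rw [one_div]; gcongr; exact hw')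
  rw [dist_eq_norm, mpIntegral, mpIntegral, ← integral_sub (integrable_mpKernel hw₀)
    (integrable_mpKernel hw₀')]
  exact norm_integral_le_of_forall_norm_le (by positivity) hpt

lemma norm_mpInverse_le (c : ℝ) {w : ℂ} (hw : 0 < w.im) :
    ‖mpInverse c μ w‖ ≤ (1 + |c|) / w.im := by
  have hinv : ‖-w⁻¹‖ ≤ 1 / w.im := by
    rw [norm_neg, norm_inv, one_div]
    exact inv_anti₀ hw ((le_abs_self _).trans (Complex.abs_im_le_norm w))
  calc ‖mpInverse c μ w‖ ≤ 1 / w.im + |c| * (1 / w.im) := by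
        refine (norm_add_le _ _).trans (add_le_add hinv ?_)
        rw [norm_mul, Complex.norm_real, Real.norm_eq_abs]
        gcongr
        exact norm_mpIntegral_le hw
    _ = (1 + |c|) / w.im := by ring

lemma eventually_mpInverse_ne (c : ℝ) {x : ℝ} (hx : 0 < x) {m₀ : ℂ} (hm₀ : 0 < m₀.im) :
    ∀ᶠ w in 𝓝[≠] m₀, mpInverse c μ w ≠ x := by
  have hA := (differentiableOn_mpInverse (μ := μ) c).analyticOnNhd isOpen_upperHalfPlaneSet
  refine (hA m₀ hm₀ |>.eventually_eq_or_eventually_ne analyticAt_const).resolve_left fun heq => ?_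
  -- By the identity theorem `mpInverse c μ ≡ x` on the half-plane, but it is small at `i ∞`.
  have hconst := hA.eqOn_of_preconnected_of_eventuallyEq analyticOnNhd_const
    (convex_halfSpace_im_gt 0).isPreconnected hm₀ heq
  set w : ℂ := Complex.I * (2 * (1 + |c|) / x : ℝ)
  have hw : w.im = 2 * (1 + |c|) / x := by simp [w]
  have hw_pos : 0 < w.im := by rw [hw]; positivity
  have := norm_mpInverse_le (μ := μ) c hw_pos
  rw [hconst hw_pos, Complex.norm_real, Real.norm_of_nonneg hx.le, hw] at this
  have h2 : (1 + |c|) / (2 * (1 + |c|) / x) = x / 2 := by field_simp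
  linarith

lemma norm_le_of_eq_mpInverse {c x : ℝ} (hc : 0 < c) (hx : 0 < x) {m : ℂ} (hm : 0 < m.im)
    (h : (x : ℂ) = mpInverse c μ m) : ‖m‖ ≤ (1 + √c) / x := by
  have hm0 : m ≠ 0 := fun h0 => by simp [h0] at hm
  have hmn : 0 < ‖m‖ := norm_pos_iff.mpr hm0
  have hsc : 0 < √c := Real.sqrt_pos.mpr hc
  -- As `x` is real, the imaginary part of the equation is `Im m / ‖m‖² = c Im m ∫ ‖mpKernel m‖²`.
  have hL2 : ∫ t, ‖mpKernel m t‖ ^ 2 ∂μ = (1 / (√c * ‖m‖)) ^ 2 := by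
    have him := congrArg Complex.im h
    simp only [mpInverse, Complex.ofReal_im, Complex.add_im, Complex.neg_im, Complex.inv_im,
      Complex.im_ofReal_mul, im_mpIntegral hm, ← Complex.sq_norm] at him
    rw [div_pow, mul_pow, Real.sq_sqrt hc.le]
    field_simp at him ⊢
    rw [zero_mul, eq_comm, mul_eq_zero, or_iff_right hm.ne'] at him
    linarith
  have hL1 : ∫ t, ‖mpKernel m t‖ ∂μ ≤ 1 / (√c * ‖m‖) :=
    integral_le_of_integral_sq_le (integrable_mpKernel hm).norm (integrable_norm_mpKernel_sq hm)
      (by positivity) hL2.le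
  have hmG : ‖m * mpIntegral μ m‖ ≤ 1 / √c :=
    calc ‖m * mpIntegral μ m‖ ≤ ‖m‖ * ∫ t, ‖mpKernel m t‖ ∂μ := by
          rw [norm_mul]; gcongr; exact norm_integral_le_integral_norm _
      _ ≤ ‖m‖ * (1 / (√c * ‖m‖)) := by gcongr
      _ = 1 / √c := by field_simp
  have hxm : (x : ℂ) * m = -1 + c * (m * mpIntegral μ m) := by
    rw [h, mpInverse]; field_simp
  have hbound : x * ‖m‖ ≤ 1 + √c :=
    calc x * ‖m‖ = ‖-1 + c * (m * mpIntegral μ m)‖ := by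
          rw [← hxm, norm_mul, Complex.norm_real, Real.norm_of_nonneg hx.le]
      _ ≤ 1 + c * (1 / √c) := by
          refine (norm_add_le _ _).trans ?_
          rw [norm_neg, norm_one, norm_mul, Complex.norm_real, Real.norm_of_nonneg hc.le]
          gcongr
      _ = 1 + √c := by rw [mul_one_div, Real.div_sqrt]
  rw [le_div_iff₀ hx]
  linarith

end ZeroOrProbabilityMeasure

section Convergence

variable {ι : Type*} {l : Filter ι} {μs : ι → Measure ℝ} {μ : Measure ℝ}

lemma tendsto_mpIntegral_of_forall_real [∀ i, IsFiniteMeasure (μs i)] [IsFiniteMeasure μ]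
    (h : ∀ g : ℝ →ᵇ ℝ, Tendsto (fun i => ∫ x, g x ∂μs i) l (𝓝 (∫ x, g x ∂μ)))
    {w : ℂ} (hw : 0 < w.im) : Tendsto (fun i => mpIntegral (μs i) w) l (𝓝 (mpIntegral μ w)) :=
  tendsto_integral_complex_of_forall_real h <|
    .ofNormedAddCommGroup _ (continuous_mpKernel hw) _ (norm_mpKernel_le hw)

lemma tendstoLocallyUniformlyOn_mpIntegral [∀ i, IsZeroOrProbabilityMeasure (μs i)]
    (h : ∀ w : ℂ, 0 < w.im → Tendsto (fun i => mpIntegral (μs i) w) l (𝓝 (mpIntegral μ w))) :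
    TendstoLocallyUniformlyOn (fun i => mpIntegral (μs i)) (mpIntegral μ) l ℍₒ := by
  refine tendstoLocallyUniformlyOn_of_forall_exists_nhds fun w₀ hw₀ => ?_
  have hw₀ : 0 < w₀.im := hw₀
  let κ : ℝ≥0 := ⟨w₀.im / 2, by positivity⟩
  have hκ : 0 < κ := NNReal.coe_pos.mp (half_pos hw₀)
  have hsub : closedBall w₀ (w₀.im / 2) ⊆ {w | κ ≤ w.im} := fun w hw => by
    have := im_sub_le_im_of_mem_closedBall hw
    change w₀.im / 2 ≤ w.im
    linarith
  refine ⟨closedBall w₀ (w₀.im / 2), mem_nhdsWithin_of_mem_nhds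
    (closedBall_mem_nhds _ (by positivity)), ?_⟩
  exact tendstoUniformlyOn_of_lipschitzOnWith (isCompact_closedBall _ _)
    (fun i => (lipschitzOnWith_mpIntegral hκ).mono hsub)
    (fun w hw => h w ((NNReal.coe_pos.mpr hκ).trans_le (hsub hw)))

lemma tendstoLocallyUniformlyOn_mpInverse [∀ i, IsZeroOrProbabilityMeasure (μs i)]
    [IsFiniteMeasure μ]
    (h : ∀ w : ℂ, 0 < w.im → Tendsto (fun i => mpIntegral (μs i) w) l (𝓝 (mpIntegral μ w)))
    {cs : ι → ℝ} {c : ℝ} (hc : Tendsto cs l (𝓝 c)) :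
    TendstoLocallyUniformlyOn (fun i => mpInverse (cs i) (μs i)) (mpInverse c μ) l ℍₒ := by
  have hinv : TendstoUniformlyOn (fun _ (w : ℂ) => -w⁻¹) (fun w => -w⁻¹) l ℍₒ :=
    fun u hu => .of_forall fun _ _ _ => refl_mem_uniformity hu
  have hc' : TendstoUniformlyOn (fun i (_ : ℂ) => (cs i : ℂ)) (fun _ => (c : ℂ)) l ℍₒ :=
    ((Complex.continuous_ofReal.tendsto c).comp hc).tendstoUniformlyOn_const _
  exact hinv.tendstoLocallyUniformlyOn.fun_add <|
    hc'.tendstoLocallyUniformlyOn.fun_mul₀ (tendstoLocallyUniformlyOn_mpIntegral h)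
      continuousOn_const
      fun _ hw => (differentiableAt_mpIntegral hw).continuousAt.continuousWithinAt

lemma tendsto_mpInverse_of_tendsto [∀ i, IsZeroOrProbabilityMeasure (μs i)] [IsFiniteMeasure μ]
    (h : ∀ w : ℂ, 0 < w.im → Tendsto (fun i => mpIntegral (μs i) w) l (𝓝 (mpIntegral μ w)))
    {cs : ι → ℝ} {c : ℝ} (hc : Tendsto cs l (𝓝 c)) {ms : ι → ℂ} {m : ℂ} (hm : 0 < m.im)
    (hms : Tendsto ms l (𝓝 m)) :
    Tendsto (fun i => mpInverse (cs i) (μs i) (ms i)) l (𝓝 (mpInverse c μ m)) :=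
  (tendstoLocallyUniformlyOn_mpInverse h hc).tendsto_comp
    ((differentiableOn_mpInverse c).continuousOn m hm) hm
    (tendsto_nhdsWithin_iff.2 ⟨hms, hms.eventually (isOpen_upperHalfPlaneSet.mem_nhds hm)⟩)

end Convergence

section SolutionConvergence

variable {μs : ℕ → Measure ℝ} [∀ n, IsZeroOrProbabilityMeasure (μs n)] {μ : Measure ℝ}
  (hμ : ∀ w : ℂ, 0 < w.im → Tendsto (fun n => mpIntegral (μs n) w) atTop (𝓝 (mpIntegral μ w)))
  {cs : ℕ → ℝ} {c : ℝ} (hcs : Tendsto cs atTop (𝓝 c))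
  {xs : ℕ → ℝ} {x : ℝ} (hxs : Tendsto xs atTop (𝓝 x)) {ms : ℕ → ℂ}
include hμ hcs hxs

lemma tendsto_im_zero_of_forall_mpInverse_ne [IsFiniteMeasure μ] (hc : 0 < c) (hx : 0 < x)
    (hms : ∀ n, 0 ≤ (ms n).im ∧ (xs n : ℂ) = mpInverse (cs n) (μs n) (ms n))
    (hne : ∀ w : ℂ, 0 < w.im → mpInverse c μ w ≠ x) :
    Tendsto (fun n => (ms n).im) atTop (𝓝 0) := by
  by_contra hcon
  obtain ⟨ε, hε, hfreq⟩ : ∃ ε > 0, ∃ᶠ n in atTop, ε ≤ (ms n).im := by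
    by_contra! h
    exact hcon (tendsto_order.2 ⟨fun a ha => .of_forall fun n => ha.trans_le (hms n).1, h⟩)
  set B := (1 + √(c + 1)) / (x / 2)
  set K : Set ℂ := {w | ε ≤ w.im} ∩ closedBall 0 B
  have hK : IsClosed K :=
    (isClosed_le continuous_const Complex.continuous_im).inter isClosed_closedBall
  -- The a priori bound on solutions keeps the sequence in a compact set.
  have hev : ∀ᶠ n in atTop, ε ≤ (ms n).im → ms n ∈ K := by
    filter_upwards [hcs.eventually_lt_const (lt_add_one c), hcs.eventually_const_lt hc,
      hxs.eventually_const_lt (half_lt_self hx)] with n hcn hcn₀ hxn hmn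
    refine ⟨hmn, mem_closedBall_zero_iff.mpr ?_⟩
    refine (norm_le_of_eq_mpInverse hcn₀ ((half_pos hx).trans hxn) (hε.trans_le hmn)
      (hms n).2).trans (div_le_div₀ (by positivity) (by gcongr) (half_pos hx) hxn.le)
  obtain ⟨w, hwK, φ, hφ, hlim⟩ := tendsto_subseq_of_frequently_bounded
    (isBounded_closedBall.subset Set.inter_subset_right)
    ((hfreq.and_eventually hev).mono fun n h => h.2 h.1)
  rw [hK.closure_eq] at hwK
  have hw : 0 < w.im := hε.trans_le hwK.1
  have hlim_eq := tendsto_mpInverse_of_tendsto (μs := fun k => μs (φ k))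
    (fun w hw => (hμ w hw).comp hφ.tendsto_atTop) (hcs.comp hφ.tendsto_atTop) hw hlim
  refine hne w hw (tendsto_nhds_unique (hlim_eq.congr fun k => (hms (φ k)).2.symm) ?_)
  exact (Complex.continuous_ofReal.tendsto x).comp (hxs.comp hφ.tendsto_atTop)

lemma tendsto_of_im_pos_of_eq_mpInverse [IsZeroOrProbabilityMeasure μ] (hx : 0 < x) {m₀ : ℂ}
    (hm₀ : 0 < m₀.im) (heq : (x : ℂ) = mpInverse c μ m₀)
    (huniq : ∀ n, ∀ w : ℂ, 0 < w.im → (xs n : ℂ) = mpInverse (cs n) (μs n) w → w = ms n) :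
    Tendsto ms atTop (𝓝 m₀) :=
  tendsto_of_tendstoLocallyUniformlyOn_of_unique_zero isOpen_upperHalfPlaneSet
    (F := fun n w => mpInverse (cs n) (μs n) w - xs n) (f := fun w => mpInverse c μ w - x)
    (fun n => (differentiableOn_mpInverse _).sub_const _)
    ((tendstoLocallyUniformlyOn_mpInverse hμ hcs).fun_sub
      ((Complex.continuous_ofReal.tendsto x).comp hxs
        |>.tendstoUniformlyOn_const _ |>.tendstoLocallyUniformlyOn))
    hm₀ (by rw [← heq, sub_self])
    ((eventually_mpInverse_ne c hx hm₀).mono fun _ hw => sub_ne_zero.mpr hw)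
    (fun n w hw hFw => huniq n w hw (sub_eq_zero.mp hFw).symm)

lemma tendsto_im_of_unique_solution [IsZeroOrProbabilityMeasure μ] (hc : 0 < c) (hx : 0 < x)
    (hms : ∀ n, 0 ≤ (ms n).im ∧ (xs n : ℂ) = mpInverse (cs n) (μs n) (ms n) ∧
      ∀ w : ℂ, 0 < w.im → (xs n : ℂ) = mpInverse (cs n) (μs n) w → w = ms n)
    {m₀ : ℂ} (hm₀ : 0 ≤ m₀.im ∧ (x : ℂ) = mpInverse c μ m₀ ∧
      ∀ w : ℂ, 0 < w.im → (x : ℂ) = mpInverse c μ w → w = m₀) :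
    Tendsto (fun n => (ms n).im) atTop (𝓝 m₀.im) := by
  obtain ⟨him, heq, huniq⟩ := hm₀
  rcases him.eq_or_lt with hzero | hpos
  · rw [← hzero]
    refine tendsto_im_zero_of_forall_mpInverse_ne hμ hcs hxs hc hx
      (fun n => ⟨(hms n).1, (hms n).2.1⟩) fun w hw hwx => ?_
    rw [huniq w hw hwx.symm] at hw
    exact hw.ne hzero
  · exact (Complex.continuous_im.tendsto _).comp
      (tendsto_of_im_pos_of_eq_mpInverse hμ hcs hxs hx hpos heq fun n => (hms n).2.2)

end SolutionConvergence

instance isZeroOrProbabilityMeasure_specMeasure {m : ℕ} {A : Matrix (Fin m) (Fin m) ℝ}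
    (hA : A.IsHermitian) :
    IsZeroOrProbabilityMeasure (specMeasure hA) := by
  rw [isZeroOrProbabilityMeasure_iff, specMeasure, Measure.smul_apply, Measure.finsetSum_apply]
  rcases eq_or_ne m 0 with rfl | hm
  · simp
  · right
    simp [ENNReal.inv_mul_cancel (Nat.cast_ne_zero.mpr hm) (ENNReal.natCast_ne_top m)]

theorem densities_approximate_along_converging_sequences_general
    (p : ℕ → ℕ)
    (c : ℝ) (hc : c ∈ Set.Ioo (0 : ℝ) 1)
    (cs : ℕ → ℝ) (hcs : Tendsto cs atTop (𝓝 c))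
    (T : (n : ℕ) → Matrix (Fin (p n)) (Fin (p n)) ℝ)
    (hT : ∀ n, (T n).PosDef)
    (H : Measure ℝ) [IsProbabilityMeasure H]
    (hweak : ∀ g : BoundedContinuousFunction ℝ ℝ,
      Tendsto (fun n => ∫ t, g t ∂(specMeasure (hT n).isHermitian))
        atTop (𝓝 (∫ t, g t ∂H)))
    (a b : ℝ) (ha : 0 < a)
    (mn : ℕ → ℝ → ℂ) (minf : ℝ → ℂ)
    (hmn : ∀ n : ℕ, ∀ x ∈ Set.Icc a b,
      0 ≤ (mn n x).im ∧
      (x : ℂ) = -(mn n x)⁻¹ + ((cs n : ℝ) : ℂ) *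
          ∫ t, (t : ℂ) / (1 + (t : ℂ) * mn n x) ∂(specMeasure (hT n).isHermitian) ∧
      ∀ w : ℂ, 0 < w.im →
        (x : ℂ) = -w⁻¹ + ((cs n : ℝ) : ℂ) *
            ∫ t, (t : ℂ) / (1 + (t : ℂ) * w) ∂(specMeasure (hT n).isHermitian) →
        w = mn n x)
    (hminf : ∀ x ∈ Set.Icc a b,
      0 ≤ (minf x).im ∧
      (x : ℂ) = -(minf x)⁻¹ + (c : ℂ) * ∫ t, (t : ℂ) / (1 + (t : ℂ) * minf x) ∂H ∧
      ∀ w : ℂ, 0 < w.im →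
        (x : ℂ) = -w⁻¹ + (c : ℂ) * ∫ t, (t : ℂ) / (1 + (t : ℂ) * w) ∂H → w = minf x)
    (xs : ℕ → ℝ) (x : ℝ) (hxs : ∀ n, xs n ∈ Set.Icc a b) (hx : x ∈ Set.Icc a b)
    (hlim : Tendsto xs atTop (𝓝 x)) :
    Tendsto (fun n => (mn n (xs n)).im / Real.pi - (minf (xs n)).im / Real.pi)
      atTop (𝓝 0) := by
  have hx₀ : 0 < x := ha.trans_le hx.1
  have hμ := fun (w : ℂ) (hw : 0 < w.im) => tendsto_mpIntegral_of_forall_real hweak hw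
  have hmn_lim := tendsto_im_of_unique_solution hμ hcs hlim hc.1 hx₀
    (fun n => hmn n (xs n) (hxs n)) (hminf x hx)
  have hminf_lim := tendsto_im_of_unique_solution (μs := fun _ => H) (fun _ _ => tendsto_const_nhds)
    tendsto_const_nhds hlim hc.1 hx₀ (fun n => hminf (xs n) (hxs n)) (hminf x hx)
  simpa using (hmn_lim.div_const Real.pi).sub (hminf_lim.div_const Real.pi)

/-- Lemma 2: along sequences `x_n → x` in the support `[a,b]`,
`f_{c_n,H_n}(x_n) - f_{c,H}(x_n) → 0`, where `π f_{c',H'}(y)` is the imaginary part of the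
solution of the Marcenko–Pastur inverse equation at `y` for parameters `(c',H')`. -/
theorem densities_approximate_along_converging_sequences
    (p : ℕ → ℕ)
    (c : ℝ) (hc : c ∈ Set.Ioo (0 : ℝ) 1)
    (cs : ℕ → ℝ) (hcs0 : ∀ n, 0 < cs n) (hcs : Tendsto cs atTop (𝓝 c))
    (T : (n : ℕ) → Matrix (Fin (p n)) (Fin (p n)) ℝ)
    (hT : ∀ n, (T n).PosDef)
    (C : ℝ) (hC : ∀ n i, (hT n).isHermitian.eigenvalues i ≤ C)
    (H : Measure ℝ) [IsProbabilityMeasure H]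
    (hweak : ∀ g : BoundedContinuousFunction ℝ ℝ,
      Tendsto (fun n => ∫ t, g t ∂(specMeasure (hT n).isHermitian))
        atTop (𝓝 (∫ t, g t ∂H)))
    (a b : ℝ) (ha : 0 < a) (hab : a < b)
    (mn : ℕ → ℝ → ℂ) (minf : ℝ → ℂ)
    (hmn : ∀ n : ℕ, ∀ x ∈ Set.Icc a b,
      0 ≤ (mn n x).im ∧
      (x : ℂ) = -(mn n x)⁻¹ + ((cs n : ℝ) : ℂ) *
          ∫ t, (t : ℂ) / (1 + (t : ℂ) * mn n x) ∂(specMeasure (hT n).isHermitian) ∧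
      ∀ w : ℂ, 0 < w.im →
        (x : ℂ) = -w⁻¹ + ((cs n : ℝ) : ℂ) *
            ∫ t, (t : ℂ) / (1 + (t : ℂ) * w) ∂(specMeasure (hT n).isHermitian) →
        w = mn n x)
    (hminf : ∀ x ∈ Set.Icc a b,
      0 ≤ (minf x).im ∧
      (x : ℂ) = -(minf x)⁻¹ + (c : ℂ) * ∫ t, (t : ℂ) / (1 + (t : ℂ) * minf x) ∂H ∧
      ∀ w : ℂ, 0 < w.im →
        (x : ℂ) = -w⁻¹ + (c : ℂ) * ∫ t, (t : ℂ) / (1 + (t : ℂ) * w) ∂H → w = minf x)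
    (xs : ℕ → ℝ) (x : ℝ) (hxs : ∀ n, xs n ∈ Set.Icc a b) (hx : x ∈ Set.Icc a b)
    (hlim : Tendsto xs atTop (𝓝 x)) :
    Tendsto (fun n => (mn n (xs n)).im / Real.pi - (minf (xs n)).im / Real.pi)
      atTop (𝓝 0) :=
  densities_approximate_along_converging_sequences_general p c hc cs hcs T hT H hweak a b ha mn minf
    hmn hminf xs x hxs hx hlim
end
end

section
/- The Marcenko–Pastur densities depend continuously on the ratio parameter uniformly in x: if c_n → c with c ∈ (0,1) and all c_n ∈ (0,1), then sup_{x∈ℝ} |f_{c_n}(x) − f_c(x)| → 0 as n → ∞. -/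
open MeasureTheory Matrix Filter Finset Topology ProbabilityTheory
open scoped ENNReal BigOperators

noncomputable section

/-! For `0 < c < 1` the map `(c, x) ↦ f_c(x)` is jointly continuous at `(c, x)`: away from
`x = 0` its defining formula is, and near `x = 0` it vanishes identically because the support
`[(1 - √c)², (1 + √c)²]` stays away from `0`. Every density with `c ≤ 1` is supported in `[0, 4]`,
and joint continuity on `(0, 1) × [0, 4]` with `[0, 4]` compact makes `f_{c'} → f_c` uniform. -/

theorem tendsto_iSup_abs_sub_of_tendstoUniformly {ι α : Type*} {p : Filter ι} {F : ι → α → ℝ}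
    {f : α → ℝ} (h : TendstoUniformly F f p) :
    Tendsto (fun i => ⨆ x, |F i x - f x|) p (𝓝 0) := by
  rw [Metric.tendsto_nhds]
  intro ε hε
  filter_upwards [Metric.tendstoUniformly_iff.1 h (ε / 2) (half_pos hε)] with i hi
  have hsup : (⨆ x, |F i x - f x|) ≤ ε / 2 :=
    Real.iSup_le (fun x => by simpa [Real.dist_eq, abs_sub_comm] using (hi x).le) (by positivity)
  rw [Real.dist_eq, sub_zero, abs_of_nonneg (Real.iSup_nonneg fun x => abs_nonneg _)]
  linarith

/-- Outside the support the radicand is negative, so `Real.sqrt` already returns `0` there. -/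
theorem mpDensity_eq_sqrt_div (c x : ℝ) :
    mpDensity c x = Real.sqrt (((1 + Real.sqrt c) ^ 2 - x) * (x - (1 - Real.sqrt c) ^ 2))
      / (2 * Real.pi * c * x) := by
  unfold mpDensity
  split_ifs with h
  · rfl
  · have hs := Real.sqrt_nonneg c
    have hprod : ((1 + Real.sqrt c) ^ 2 - x) * (x - (1 - Real.sqrt c) ^ 2) ≤ 0 := by
      rcases not_and_or.1 h with h | h <;> push Not at h <;> nlinarith
    rw [Real.sqrt_eq_zero'.2 hprod, zero_div]

theorem mpDensity_eq_zero_of_notMem_Icc {c x : ℝ} (hc : c ≤ 1) (hx : x ∉ Set.Icc (0 : ℝ) 4) :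
    mpDensity c x = 0 := by
  have hs0 := Real.sqrt_nonneg c
  have hs1 : Real.sqrt c ≤ 1 := Real.sqrt_le_one.2 hc
  rw [mpDensity, if_neg]
  rintro ⟨ha, hb⟩
  exact hx ⟨by nlinarith, by nlinarith⟩

theorem continuousAt_uncurry_mpDensity {c x : ℝ} (hc0 : c ≠ 0) (hc1 : c ≠ 1) :
    ContinuousAt (Function.uncurry mpDensity) (c, x) := by
  rcases eq_or_ne x 0 with rfl | hx
  · have hgap : 1 - Real.sqrt c ≠ 0 := sub_ne_zero.2 (Ne.symm (Real.sqrt_eq_one.not.2 hc1))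
    have hbelow : {q : ℝ × ℝ | q.2 < (1 - Real.sqrt q.1) ^ 2} ∈ 𝓝 (c, 0) :=
      (isOpen_lt continuous_snd (by fun_prop)).mem_nhds
        (by simp only [Set.mem_ofPred_eq]; positivity)
    refine (continuousAt_const (y := (0 : ℝ))).congr (eventuallyEq_of_mem hbelow fun q hq => ?_)
    change 0 = mpDensity q.1 q.2
    rw [mpDensity, if_neg fun h => (not_le.2 hq) h.1]
  · have hden : 2 * Real.pi * c * x ≠ 0 := by positivity
    simp only [Function.uncurry_def, mpDensity_eq_sqrt_div]
    exact ContinuousAt.div (by fun_prop) (by fun_prop) hden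

theorem tendstoUniformly_mpDensity {c : ℝ} (hc : c ∈ Set.Ioo (0 : ℝ) 1) :
    TendstoUniformly mpDensity (mpDensity c) (𝓝 c) := by
  have hcont : ContinuousOn (Function.uncurry mpDensity) (Set.Ioo 0 1 ×ˢ Set.Icc 0 4) :=
    fun q hq => (continuousAt_uncurry_mpDensity hq.1.1.ne' hq.1.2.ne).continuousWithinAt
  rw [Metric.tendstoUniformly_iff]
  intro ε hε
  obtain ⟨v, hv, hclose⟩ :=
    isCompact_Icc.mem_uniformity_of_prod hcont hc (Metric.dist_mem_uniformity hε)
  rw [nhdsWithin_eq_nhds.2 (Ioo_mem_nhds hc.1 hc.2)] at hv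
  filter_upwards [hv, Iic_mem_nhds hc.2] with d hdv hd1 x
  by_cases hx : x ∈ Set.Icc (0 : ℝ) 4
  · exact dist_comm (mpDensity d x) _ ▸ hclose d hdv x hx
  · rw [mpDensity_eq_zero_of_notMem_Icc hd1 hx, mpDensity_eq_zero_of_notMem_Icc hc.2.le hx,
      dist_self]
    exact hε

theorem mp_density_continuous_in_ratio_general
    (c : ℝ) (hc : c ∈ Set.Ioo (0 : ℝ) 1)
    (cs : ℕ → ℝ)
    (hlim : Tendsto cs atTop (𝓝 c)) :
    Tendsto (fun n => ⨆ x : ℝ, |mpDensity (cs n) x - mpDensity c x|) atTop (𝓝 0) :=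
  tendsto_iSup_abs_sub_of_tendstoUniformly fun u hu =>
    hlim.eventually (tendstoUniformly_mpDensity hc u hu)

/-- The Marcenko–Pastur densities depend continuously on the ratio parameter,
uniformly in `x`. -/
theorem mp_density_continuous_in_ratio
    (c : ℝ) (hc : c ∈ Set.Ioo (0 : ℝ) 1)
    (cs : ℕ → ℝ) (hcs : ∀ n, cs n ∈ Set.Ioo (0 : ℝ) 1)
    (hlim : Tendsto cs atTop (𝓝 c)) :
    Tendsto (fun n => ⨆ x : ℝ, |mpDensity (cs n) x - mpDensity c x|) atTop (𝓝 0) :=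
  mp_density_continuous_in_ratio_general c hc cs hlim
end
end

section
/- Kernel smoothing of a continuous compactly supported density converges uniformly on the support: let f be a probability density on ℝ that vanishes outside [a,b] and is continuous on ℝ (hence bounded), and let K : ℝ → ℝ satisfy sup_x |K(x)| < ∞, |x K(x)| → 0 as |x| → ∞, ∫ K(x) dx = 1 and ∫ |K(x)| dx < ∞. If h = h(n) > 0 and h → 0, then sup_{x∈[a,b]} | h^{-1} ∫ K((x−t)/h) f(t) dt − f(x) | → 0 as n → ∞. -/
/-! After the substitution `t = x - h u`, and using `∫ K = 1`, the error of the smoothed density at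
`x` is `∫ K(u) (f(x - h u) - f(x)) du`. For uniformly continuous bounded `f` the integrand tends
to `0` for each fixed `u`, uniformly in `x`, and is dominated by `2 sup ‖f‖ |K|`. Dominated
convergence along the countably generated filter `l ×ˢ ⊤` on pairs `(i, x)` therefore gives
uniform convergence on all of `ℝ`, in particular on `[a, b]`. -/

open MeasureTheory Matrix Filter Finset Topology ProbabilityTheory
open scoped ENNReal BigOperators

noncomputable section

open scoped Uniformity

section KernelSmoothing

variable {E : Type*} [NormedAddCommGroup E] [NormedSpace ℝ E]

def kernelSmoothing (K : ℝ → ℝ) (h : ℝ) (f : ℝ → E) (x : ℝ) : E :=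
  h⁻¹ • ∫ t, K ((x - t) / h) • f t

theorem kernelSmoothing_eq_integral_comp_mul (K : ℝ → ℝ) (f : ℝ → E) {h : ℝ} (hh : 0 < h)
    (x : ℝ) : kernelSmoothing K h f x = ∫ u, K u • f (x - h * u) := by
  have hshift : ∫ t, K ((x - t) / h) • f t = ∫ s, K (s / h) • f (x - s) := by
    simpa only [sub_sub_cancel] using
      integral_sub_left_eq_self (fun s => K (s / h) • f (x - s)) volume x
  have hscale : ∫ s, K (s / h) • f (x - s) = h • ∫ u, K u • f (x - h * u) := by
    simpa only [mul_div_cancel₀ _ hh.ne', abs_of_pos hh] using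
      Measure.integral_comp_div (fun u => K u • f (x - h * u)) h
  rw [kernelSmoothing, hshift, hscale, inv_smul_smul₀ hh.ne']

theorem kernelSmoothing_sub_eq_integral [CompleteSpace E] {K : ℝ → ℝ} (hK : Integrable K)
    (hK1 : ∫ u, K u = 1) {f : ℝ → E} (hf : Continuous f) {C : ℝ} (hfC : ∀ x, ‖f x‖ ≤ C)
    {h : ℝ} (hh : 0 < h) (x : ℝ) :
    kernelSmoothing K h f x - f x = ∫ u, K u • (f (x - h * u) - f x) := by
  have hint : Integrable (fun u => K u • f (x - h * u)) :=
    hK.smul_bdd C (by fun_prop) (.of_forall fun u => hfC _)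
  rw [kernelSmoothing_eq_integral_comp_mul K f hh]
  simp_rw [smul_sub]
  rw [integral_sub hint (hK.smul_const (f x)), integral_smul_const, hK1, one_smul]

theorem tendsto_integral_smul_sub_of_uniformContinuous {ι : Type*} {l : Filter ι}
    [l.IsCountablyGenerated] {K : ℝ → ℝ} (hK : Integrable K) {f : ℝ → E}
    (hfu : UniformContinuous f) {C : ℝ} (hfC : ∀ x, ‖f x‖ ≤ C) {h x : ι → ℝ}
    (hh : Tendsto h l (𝓝 0)) :
    Tendsto (fun i => ∫ u, K u • (f (x i - h i * u) - f (x i))) l (𝓝 0) := by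
  have hlim : ∀ u, Tendsto (fun i => K u • (f (x i - h i * u) - f (x i))) l (𝓝 0) := by
    intro u
    have hclose : Tendsto (fun i => (x i - h i * u, x i)) l (𝓤 ℝ) := by
      rw [tendsto_uniformity_iff_dist_tendsto_zero]
      simpa [Real.dist_eq, abs_mul] using (hh.abs.mul_const |u|)
    have hdist := tendsto_uniformity_iff_dist_tendsto_zero.mp (Tendsto.comp hfu hclose)
    simp only [Function.comp_apply, dist_eq_norm] at hdist
    simpa using (tendsto_zero_iff_norm_tendsto_zero.mpr hdist).const_smul (K u)
  simpa using tendsto_integral_filter_of_dominated_convergence (fun u => ‖K u‖ * (C + C))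
    (F := fun i u => K u • (f (x i - h i * u) - f (x i)))
    (.of_forall fun i => hK.aestronglyMeasurable.smul (by fun_prop))
    (.of_forall fun i => .of_forall fun u => by
      rw [norm_smul]
      gcongr
      exact (norm_sub_le _ _).trans (add_le_add (hfC _) (hfC _)))
    (hK.norm.mul_const _) (.of_forall hlim)

theorem tendstoUniformly_kernelSmoothing [CompleteSpace E] {ι : Type*} {l : Filter ι}
    [l.IsCountablyGenerated] {K : ℝ → ℝ} (hK : Integrable K) (hK1 : ∫ u, K u = 1)
    {f : ℝ → E} (hfu : UniformContinuous f) {C : ℝ} (hfC : ∀ x, ‖f x‖ ≤ C) {h : ι → ℝ}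
    (hpos : ∀ᶠ i in l, 0 < h i) (hh : Tendsto h l (𝓝 0)) :
    TendstoUniformly (fun i => kernelSmoothing K (h i) f) f l := by
  rw [tendstoUniformly_iff_tendsto, tendsto_uniformity_iff_dist_tendsto_zero]
  have hlim := tendsto_integral_smul_sub_of_uniformContinuous hK hfu hfC (x := Prod.snd)
    (hh.comp (tendsto_fst (g := (⊤ : Filter ℝ))))
  refine (tendsto_zero_iff_norm_tendsto_zero.mp hlim).congr' ?_
  filter_upwards [tendsto_fst.eventually hpos] with q hq
  rw [dist_comm, dist_eq_norm, kernelSmoothing_sub_eq_integral hK hK1 hfu.continuous hfC hq]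
  rfl

end KernelSmoothing

theorem TendstoUniformlyOn.tendsto_iSup_dist {ι α β : Type*} [PseudoMetricSpace β]
    {F : ι → α → β} {f : α → β} {l : Filter ι} {s : Set α}
    (hF : TendstoUniformlyOn F f l s) :
    Tendsto (fun i => ⨆ x ∈ s, dist (F i x) (f x)) l (𝓝 0) := by
  rw [Metric.tendsto_nhds]
  intro ε hε
  filter_upwards [Metric.tendstoUniformlyOn_iff.mp hF (ε / 2) (half_pos hε)] with i hi
  have hsup : ⨆ x ∈ s, dist (F i x) (f x) ≤ ε / 2 :=
    Real.iSup_le (fun x => Real.iSup_le (fun hx => by rw [dist_comm]; exact (hi x hx).le)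
      (half_pos hε).le) (half_pos hε).le
  have hnonneg : 0 ≤ ⨆ x ∈ s, dist (F i x) (f x) :=
    Real.iSup_nonneg fun x => Real.iSup_nonneg fun _ => dist_nonneg
  rw [Real.dist_0_eq_abs, abs_of_nonneg hnonneg]
  linarith

theorem kernel_smoothing_uniform_convergence_general
    (f : ℝ → ℝ) (a b : ℝ)
    (hf0 : ∀ x, x ∉ Set.Icc a b → f x = 0)
    (hfcont : Continuous f)
    (K : ℝ → ℝ)
    (hKint : ∫ x, K x = 1)
    (hKabs : Integrable K)
    (h : ℕ → ℝ) (hpos : ∀ n, 0 < h n) (hto0 : Tendsto h atTop (𝓝 0)) :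
    Tendsto (fun n => ⨆ x ∈ Set.Icc a b,
      |(∫ t, K ((x - t) / h n) * f t) / h n - f x|) atTop (𝓝 0) := by
  have hsupp : HasCompactSupport f := .intro isCompact_Icc hf0
  obtain ⟨C, hC⟩ := hsupp.exists_bound_of_continuous hfcont
  have := (tendstoUniformly_kernelSmoothing hKabs hKint
    (hsupp.uniformContinuous_of_continuous hfcont) hC (.of_forall hpos) hto0).tendstoUniformlyOn
    |>.tendsto_iSup_dist (s := Set.Icc a b)
  simpa only [kernelSmoothing, Real.dist_eq, smul_eq_mul, div_eq_inv_mul] using this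

/-- Kernel smoothing of a continuous compactly supported density converges uniformly
on the support. -/
theorem kernel_smoothing_uniform_convergence
    (f : ℝ → ℝ) (a b : ℝ) (hab : a < b)
    (hf0 : ∀ x, x ∉ Set.Icc a b → f x = 0)
    (hfcont : Continuous f)
    (hfnonneg : ∀ x, 0 ≤ f x)
    (hfint : ∫ x, f x = 1)
    (K : ℝ → ℝ) (hKmeas : Measurable K)
    (hKbdd : ∃ B : ℝ, ∀ x, |K x| ≤ B)
    (hKdecay : Tendsto (fun x => x * K x) (cocompact ℝ) (𝓝 0))
    (hKint : ∫ x, K x = 1)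
    (hKabs : Integrable K)
    (h : ℕ → ℝ) (hpos : ∀ n, 0 < h n) (hto0 : Tendsto h atTop (𝓝 0)) :
    Tendsto (fun n => ⨆ x ∈ Set.Icc a b,
      |(∫ t, K ((x - t) / h n) * f t) / h n - f x|) atTop (𝓝 0) :=
  kernel_smoothing_uniform_convergence_general f a b hf0 hfcont K hKint hKabs h hpos hto0
end
end
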